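/- Let a, b, c be integers with 2 ≤ a ≤ b ≤ c. Then there exists a unique integer c₀ with ab − b ≤ c₀ ≤ ab − 1 such that the cyclic triple (a, b, c) is mutation-acyclic if and only if c > c₀. (Equivalently: for fixed a ≤ b, the set of c ≥ b for which (a,b,c) is mutation-cyclic is exactly an interval [b, c₀].) -/

import Mathlib

/-- One mutation step on a triple of integers: replace one entry `x` by
(product of the other two) − `x`. -/
def mutStep (t s : ℤ × ℤ × ℤ) : Prop :=
  s = (t.1, t.2.1, t.1 * t.2.1 - t.2.2) ∨
  s = (t.1, t.1 * t.2.2 - t.2.1, t.2.2) ∨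
  s = (t.2.1 * t.2.2 - t.1, t.2.1, t.2.2)

/-- A triple is mutation-acyclic if some finite sequence of mutations
reaches a triple with a nonpositive entry (an acyclic quiver). -/
def MutationAcyclic (t : ℤ × ℤ × ℤ) : Prop :=
  ∃ s, Relation.ReflTransGen mutStep t s ∧ (s.1 ≤ 0 ∨ s.2.1 ≤ 0 ∨ s.2.2 ≤ 0)

/-- A triple is mutation-cyclic if every quiver in its mutation class is cyclic. -/
def MutationCyclic (t : ℤ × ℤ × ℤ) : Prop := ¬ MutationAcyclic t

/-!
The quantity `markov (x, y, z) = x² + y² + z² − xyz` is invariant under mutation. A triple with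
all entries `≥ 2` and `markov ≤ 4` mutates into another such triple, so it is mutation-cyclic.
Conversely, if `markov > 4`, mutating at a largest entry of a positive triple strictly lowers the
sum of the entries, so this descent reaches a nonpositive entry. Hence for `c ≥ b` the triple
`(a, b, c)` is mutation-acyclic iff `c² − abc + a² + b² > 4`. As a function of `c` this is
symmetric about `ab/2` and increasing beyond it; it is `≤ 4` on `[b, ab − b]` and `> 4` at
`c = ab`, which yields the threshold `c₀`.
-/

theorem Int.existsUnique_threshold {P : ℤ → Prop} {b m n : ℤ} (hbm : b ≤ m) (hmn : m ≤ n)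
    (hP : MonotoneOn P (Set.Ici b)) (hm : ¬ P m) (hn : P n) :
    ∃! c₀ : ℤ, m ≤ c₀ ∧ c₀ ≤ n - 1 ∧ ∀ c : ℤ, b ≤ c → (P c ↔ c > c₀) := by
  have hlt : ∀ c, b ≤ c → ¬ P c → c < n := fun c hc hPc => by
    by_contra! h
    exact hPc (hP (Set.mem_Ici.2 (hbm.trans hmn)) (Set.mem_Ici.2 hc) h hn)
  obtain ⟨c₀, ⟨hmc₀, hPc₀⟩, hgreatest⟩ := Int.exists_greatest_of_bdd (P := fun c => m ≤ c ∧ ¬ P c)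
    ⟨n, fun c hc => (hlt c (hbm.trans hc.1) hc.2).le⟩ ⟨m, le_rfl, hm⟩
  have hthreshold : ∀ c, b ≤ c → (P c ↔ c > c₀) := fun c hc => by
    refine ⟨fun hPc => ?_, fun hc₀c => ?_⟩
    · by_contra! h
      exact hPc₀ (hP (Set.mem_Ici.2 hc) (Set.mem_Ici.2 (hbm.trans hmc₀)) h hPc)
    · by_contra hPc
      have := hgreatest c ⟨by omega, hPc⟩
      omega
  refine ⟨c₀, ⟨hmc₀, by linarith [hlt c₀ (hbm.trans hmc₀) hPc₀], hthreshold⟩, ?_⟩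
  rintro c₁ ⟨hmc₁, -, hthreshold₁⟩
  refine le_antisymm (not_lt.1 fun h => ?_) (not_lt.1 fun h => ?_)
  · exact lt_irrefl c₁ ((hthreshold₁ c₁ (hbm.trans hmc₁)).1 ((hthreshold c₁ (hbm.trans hmc₁)).2 h))
  · exact lt_irrefl c₀ ((hthreshold c₀ (hbm.trans hmc₀)).1 ((hthreshold₁ c₀ (hbm.trans hmc₀)).2 h))

def markov (t : ℤ × ℤ × ℤ) : ℤ := t.1 ^ 2 + t.2.1 ^ 2 + t.2.2 ^ 2 - t.1 * t.2.1 * t.2.2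

lemma markov_swap₁₂ (x y z : ℤ) : markov (y, x, z) = markov (x, y, z) := by
  simp only [markov]; ring

lemma markov_swap₂₃ (x y z : ℤ) : markov (x, z, y) = markov (x, y, z) := by
  simp only [markov]; ring

lemma markov_rotate (x y z : ℤ) : markov (y, z, x) = markov (x, y, z) := by
  simp only [markov]; ring

lemma markov_eq_of_mutStep {t s : ℤ × ℤ × ℤ} (h : mutStep t s) : markov s = markov t := by
  obtain ⟨x, y, z⟩ := t
  rcases h with rfl | rfl | rfl <;> simp only [markov] <;> ring

lemma MutationAcyclic.of_mutStep {t s : ℤ × ℤ × ℤ} (h : mutStep t s) (hs : MutationAcyclic s) :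
    MutationAcyclic t :=
  let ⟨u, hsu, hu⟩ := hs
  ⟨u, .head h hsu, hu⟩

lemma two_le_mul_sub_of_markov_le_four {x y z : ℤ} (hx : 2 ≤ x) (hy : 2 ≤ y) (hz : 2 ≤ z)
    (h : markov (x, y, z) ≤ 4) : 2 ≤ x * y - z := by
  simp only [markov] at h
  -- `z` and `xy − z` are the roots of `Z² − xyZ + x² + y² − markov`, so their product is `≥ 4`.
  have hprod : 0 < z * (x * y - z) := by nlinarith
  have hpos : 0 < x * y - z := pos_of_mul_pos_right hprod (by omega)
  have hne : x * y - z ≠ 1 := by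
    intro h1
    obtain rfl : z = x * y - 1 := by omega
    nlinarith [sq_nonneg (x - y)]
  omega

def MarkovBounded (t : ℤ × ℤ × ℤ) : Prop :=
  2 ≤ t.1 ∧ 2 ≤ t.2.1 ∧ 2 ≤ t.2.2 ∧ markov t ≤ 4

lemma MarkovBounded.of_mutStep {t s : ℤ × ℤ × ℤ} (ht : MarkovBounded t) (h : mutStep t s) :
    MarkovBounded s := by
  obtain ⟨x, y, z⟩ := t
  obtain ⟨hx, hy, hz, hM⟩ := ht
  have hs := (markov_eq_of_mutStep h).trans_le hM
  rcases h with rfl | rfl | rfl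
  · exact ⟨hx, hy, two_le_mul_sub_of_markov_le_four hx hy hz hM, hs⟩
  · exact ⟨hx, two_le_mul_sub_of_markov_le_four hx hz hy ((markov_swap₂₃ x y z).trans_le hM),
      hz, hs⟩
  · exact ⟨two_le_mul_sub_of_markov_le_four hy hz hx ((markov_rotate x y z).trans_le hM),
      hy, hz, hs⟩

lemma MarkovBounded.of_reflTransGen {t s : ℤ × ℤ × ℤ} (ht : MarkovBounded t)
    (h : Relation.ReflTransGen mutStep t s) : MarkovBounded s := by
  induction h with
  | refl => exact ht
  | tail _ hstep ih => exact ih.of_mutStep hstep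

lemma MarkovBounded.mutationCyclic {t : ℤ × ℤ × ℤ} (ht : MarkovBounded t) :
    MutationCyclic t := by
  rintro ⟨s, hts, hs⟩
  obtain ⟨h1, h2, h3, -⟩ := ht.of_reflTransGen hts
  omega

lemma markov_le_four_of_two_mul_le {a b c : ℤ} (ha : 2 ≤ a) (hab : a ≤ b) (hbc : b ≤ c)
    (h : 2 * c ≤ a * b) : markov (a, b, c) ≤ 4 := by
  simp only [markov]
  -- `markov (a, b, c) ≤ markov (a, b, b)` since `c ∈ [b, ab − b]`, and `markov (a, b, b) ≤ 4`.
  nlinarith [mul_nonneg (by linarith : (0:ℤ) ≤ c - b) (by linarith : (0:ℤ) ≤ a * b - b - c),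
    mul_nonneg (by linarith : (0:ℤ) ≤ a - 2) (by nlinarith : (0:ℤ) ≤ b * b - a - 2)]

lemma mul_sub_lt_of_four_lt_markov {x y z : ℤ} (hx : 0 < x) (hy : 0 < y) (hxz : x ≤ z)
    (hyz : y ≤ z) (hM : 4 < markov (x, y, z)) : x * y - z < z := by
  wlog hxy : x ≤ y generalizing x y
  · have := this hy hx hyz hxz (hM.trans_eq (markov_swap₁₂ x y z).symm) (by omega)
    linarith
  rcases eq_or_lt_of_le (show 1 ≤ x by omega) with rfl | hx2
  · omega
  by_contra! h
  exact (markov_le_four_of_two_mul_le hx2 hxy hyz (by omega)).not_gt hM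

lemma exists_mutStep_sum_lt {x y z : ℤ} (hx : 0 < x) (hy : 0 < y) (hz : 0 < z)
    (hM : 4 < markov (x, y, z)) :
    ∃ s, mutStep (x, y, z) s ∧ s.1 + s.2.1 + s.2.2 < x + y + z := by
  by_cases hzmax : x ≤ z ∧ y ≤ z
  · exact ⟨_, Or.inl rfl, by simpa using mul_sub_lt_of_four_lt_markov hx hy hzmax.1 hzmax.2 hM⟩
  by_cases hymax : x ≤ y ∧ z ≤ y
  · have := mul_sub_lt_of_four_lt_markov hx hz hymax.1 hymax.2
      (hM.trans_eq (markov_swap₂₃ x y z).symm)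
    exact ⟨_, Or.inr (Or.inl rfl), by simpa using this⟩
  · have := mul_sub_lt_of_four_lt_markov hy hz (by omega) (by omega)
      (hM.trans_eq (markov_rotate x y z).symm)
    exact ⟨_, Or.inr (Or.inr rfl), by simpa using this⟩

theorem mutationAcyclic_of_four_lt_markov (t : ℤ × ℤ × ℤ) (hM : 4 < markov t) :
    MutationAcyclic t := by
  induction hn : (t.1 + t.2.1 + t.2.2).toNat using Nat.strong_induction_on generalizing t with
  | _ n ih =>
  obtain ⟨x, y, z⟩ := t
  by_cases hpos : 0 < x ∧ 0 < y ∧ 0 < z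
  · obtain ⟨s, hstep, hsum⟩ := exists_mutStep_sum_lt hpos.1 hpos.2.1 hpos.2.2 hM
    exact .of_mutStep hstep <|
      ih _ (by simp only at hn; omega) s (hM.trans_eq (markov_eq_of_mutStep hstep).symm) rfl
  · exact ⟨_, .refl, by simp only; omega⟩

theorem mutationAcyclic_iff_four_lt_markov {a b c : ℤ} (ha : 2 ≤ a) (hb : 2 ≤ b) (hc : 2 ≤ c) :
    MutationAcyclic (a, b, c) ↔ 4 < markov (a, b, c) := by
  refine ⟨fun h => ?_, mutationAcyclic_of_four_lt_markov _⟩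
  by_contra! hM
  exact MarkovBounded.mutationCyclic ⟨ha, hb, hc, hM⟩ h

lemma four_lt_markov_of_le {a b c c' : ℤ} (ha : 2 ≤ a) (hab : a ≤ b) (hbc : b ≤ c)
    (hcc' : c ≤ c') (hM : 4 < markov (a, b, c)) : 4 < markov (a, b, c') := by
  have hc : a * b < 2 * c := by
    by_contra! h
    exact (markov_le_four_of_two_mul_le ha hab hbc h).not_gt hM
  have hdiff : markov (a, b, c') - markov (a, b, c) = (c' - c) * (c' + c - a * b) := by
    simp only [markov]; ring
  nlinarith [mul_nonneg (by omega : (0:ℤ) ≤ c' - c) (by omega : (0:ℤ) ≤ c' + c - a * b)]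

theorem stmt_16 (a b : ℤ) (ha : 2 ≤ a) (hab : a ≤ b) :
    ∃! c₀ : ℤ, a * b - b ≤ c₀ ∧ c₀ ≤ a * b - 1 ∧
      ∀ c : ℤ, b ≤ c → (MutationAcyclic (a, b, c) ↔ c > c₀) := by
  have hb : 2 ≤ b := ha.trans hab
  have hacyclic_iff : ∀ c, b ≤ c → (MutationAcyclic (a, b, c) ↔ 4 < markov (a, b, c)) :=
    fun c hc => mutationAcyclic_iff_four_lt_markov ha hb (hb.trans hc)
  have hbb : b ≤ a * b - b := by nlinarith
  refine Int.existsUnique_threshold hbb (by omega) (fun c hc c' hc' hcc' h => ?_) ?_ ?_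
  · exact (hacyclic_iff c' hc').2 <|
      four_lt_markov_of_le ha hab hc hcc' ((hacyclic_iff c hc).1 h)
  · rw [hacyclic_iff _ hbb, not_lt, markov_eq_of_mutStep (t := (a, b, b)) (Or.inl rfl)]
    exact markov_le_four_of_two_mul_le ha hab le_rfl (by nlinarith)
  · rw [hacyclic_iff _ (by nlinarith)]
    simp only [markov]
    nlinarith
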